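/- Let 𝒳 be a full additive subcategory of an abelian category 𝒜. For any bounded-above complex X• with components in 𝒳 and any complex C•, the localization functor induces an isomorphism of abelian groups Hom_{K(𝒜)}(X•, C•) ≅ Hom_{D_{ℝ𝒳}(𝒜)}(X•, C•), where D_{ℝ𝒳}(𝒜) is the Verdier quotient of K(𝒜) by the thick subcategory of right 𝒳-acyclic complexes. -/

import Mathlib

open CategoryTheory Limits

universe v u

variable {A : Type u} [Category.{v} A] [Abelian A]

/-- `Hom(X, -)` for `X ∈ 𝒳` carries the short complex `S` to a short exact
sequence of abelian groups. -/
def SESRightAcyclic (𝒳 : Set A) (S : ShortComplex A) : Prop :=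
  ∀ X ∈ 𝒳,
    (Function.Injective fun h : X ⟶ S.X₁ => h ≫ S.f) ∧
    (∀ h : X ⟶ S.X₂, h ≫ S.g = 0 → ∃ k : X ⟶ S.X₁, k ≫ S.f = h) ∧
    (Function.Surjective fun h : X ⟶ S.X₂ => h ≫ S.g)

/-- `Hom(-, Y)` for `Y ∈ 𝒴` carries the short complex `S` to a short exact
sequence of abelian groups. -/
def SESLeftAcyclic (𝒴 : Set A) (S : ShortComplex A) : Prop :=
  ∀ Y ∈ 𝒴,
    (Function.Injective fun h : S.X₃ ⟶ Y => S.g ≫ h) ∧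
    (∀ h : S.X₂ ⟶ Y, S.f ≫ h = 0 → ∃ k : S.X₃ ⟶ Y, S.g ≫ k = h) ∧
    (Function.Surjective fun h : S.X₂ ⟶ Y => S.f ≫ h)

/-- A `⁎`-acyclic short exact sequence: short exact, right `𝒳`-acyclic and
left `𝒴`-acyclic. -/
def SESStarAcyclic (𝒳 𝒴 : Set A) (S : ShortComplex A) : Prop :=
  S.ShortExact ∧ SESRightAcyclic 𝒳 S ∧ SESLeftAcyclic 𝒴 S

/-- A cochain complex `C` is right `𝒳`-acyclic if `Hom(X, C)` is acyclic for every `X ∈ 𝒳`. -/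
def RightAcyclicComplex (𝒳 : Set A) (C : CochainComplex A ℤ) : Prop :=
  ∀ X ∈ 𝒳, ∀ n : ℤ, ∀ h : X ⟶ C.X n, h ≫ C.d n (n + 1) = 0 →
    ∃ k : X ⟶ C.X (n - 1), k ≫ C.d (n - 1) n = h

/-- A cochain complex `C` is left `𝒴`-acyclic if `Hom(C, Y)` is acyclic for every `Y ∈ 𝒴`. -/
def LeftAcyclicComplex (𝒴 : Set A) (C : CochainComplex A ℤ) : Prop :=
  ∀ Y ∈ 𝒴, ∀ n : ℤ, ∀ h : C.X n ⟶ Y, C.d (n - 1) n ≫ h = 0 →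
    ∃ k : C.X (n + 1) ⟶ Y, C.d n (n + 1) ≫ k = h

/-- `f` is a right `𝒳`-quasi-isomorphism iff its mapping cone is right `𝒳`-acyclic. -/
noncomputable def RightQuasiIso (𝒳 : Set A) {C D : CochainComplex A ℤ} (f : C ⟶ D) : Prop :=
  RightAcyclicComplex 𝒳 (CochainComplex.mappingCone f)

/-- `f` is a `⁎`-quasi-isomorphism: its mapping cone is right `𝒳`-acyclic and left `𝒴`-acyclic. -/
noncomputable def StarQuasiIso (𝒳 𝒴 : Set A) {C D : CochainComplex A ℤ} (f : C ⟶ D) : Prop :=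
  RightAcyclicComplex 𝒳 (CochainComplex.mappingCone f) ∧
    LeftAcyclicComplex 𝒴 (CochainComplex.mappingCone f)

/-- A bounded-above complex with all components in `𝒳`. -/
def MinusComplexIn (𝒳 : Set A) (C : CochainComplex A ℤ) : Prop :=
  (∃ b : ℤ, ∀ i : ℤ, b < i → IsZero (C.X i)) ∧ ∀ i : ℤ, C.X i ∈ 𝒳

/-- A bounded complex. -/
def BoundedComplex (C : CochainComplex A ℤ) : Prop :=
  ∃ a b : ℤ, ∀ i : ℤ, i < a ∨ b < i → IsZero (C.X i)

/-- A proper `𝒳`-resolution `⋯ → P⁻¹ → P⁰ —ε→ M → 0`: the components of `P` in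
nonpositive degrees lie in `𝒳`, the positive components vanish, and the augmented
complex is right `𝒳`-acyclic. -/
def IsProperXResolution (𝒳 : Set A) (M : A) (P : CochainComplex A ℤ) (ε : P.X 0 ⟶ M) : Prop :=
  (∀ i : ℤ, 0 < i → IsZero (P.X i)) ∧ (∀ i : ℤ, i ≤ 0 → P.X i ∈ 𝒳) ∧
  P.d (-1) 0 ≫ ε = 0 ∧
  ∀ X ∈ 𝒳,
    (∀ h : X ⟶ M, ∃ k : X ⟶ P.X 0, k ≫ ε = h) ∧
    (∀ h : X ⟶ P.X 0, h ≫ ε = 0 → ∃ k : X ⟶ P.X (-1), k ≫ P.d (-1) 0 = h) ∧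
    (∀ n : ℤ, n < 0 → ∀ h : X ⟶ P.X n, h ≫ P.d n (n + 1) = 0 →
      ∃ k : X ⟶ P.X (n - 1), k ≫ P.d (n - 1) n = h)

/-- The augmented complex `⋯ → P⁻¹ → P⁰ —ε→ M → 0` is left `𝒴`-acyclic. -/
def AugResLeftAcyclic (𝒴 : Set A) (M : A) (P : CochainComplex A ℤ) (ε : P.X 0 ⟶ M) : Prop :=
  ∀ Y ∈ 𝒴,
    (∀ h : M ⟶ Y, ε ≫ h = 0 → h = 0) ∧
    (∀ h : P.X 0 ⟶ Y, P.d (-1) 0 ≫ h = 0 → ∃ k : M ⟶ Y, ε ≫ k = h) ∧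
    (∀ n : ℤ, n < 0 → ∀ h : P.X n ⟶ Y, P.d (n - 1) n ≫ h = 0 →
      ∃ k : P.X (n + 1) ⟶ Y, P.d n (n + 1) ≫ k = h)

/-- A proper `𝒴`-coresolution `0 → N —η→ Q⁰ → Q¹ → ⋯`. -/
def IsProperYCoresolution (𝒴 : Set A) (N : A) (Q : CochainComplex A ℤ) (η : N ⟶ Q.X 0) : Prop :=
  (∀ i : ℤ, i < 0 → IsZero (Q.X i)) ∧ (∀ i : ℤ, 0 ≤ i → Q.X i ∈ 𝒴) ∧
  η ≫ Q.d 0 1 = 0 ∧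
  ∀ Y ∈ 𝒴,
    (∀ h : N ⟶ Y, ∃ k : Q.X 0 ⟶ Y, η ≫ k = h) ∧
    (∀ h : Q.X 0 ⟶ Y, η ≫ h = 0 → ∃ k : Q.X 1 ⟶ Y, Q.d 0 1 ≫ k = h) ∧
    (∀ n : ℤ, 0 < n → ∀ h : Q.X n ⟶ Y, Q.d (n - 1) n ≫ h = 0 →
      ∃ k : Q.X (n + 1) ⟶ Y, Q.d n (n + 1) ≫ k = h)

/-- The augmented complex `0 → N —η→ Q⁰ → Q¹ → ⋯` is right `𝒳`-acyclic. -/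
def AugCoresRightAcyclic (𝒳 : Set A) (N : A) (Q : CochainComplex A ℤ) (η : N ⟶ Q.X 0) : Prop :=
  ∀ X ∈ 𝒳,
    (∀ h : X ⟶ N, h ≫ η = 0 → h = 0) ∧
    (∀ h : X ⟶ Q.X 0, h ≫ Q.d 0 1 = 0 → ∃ k : X ⟶ N, k ≫ η = h) ∧
    (∀ n : ℤ, 0 < n → ∀ h : X ⟶ Q.X n, h ≫ Q.d n (n + 1) = 0 →
      ∃ k : X ⟶ Q.X (n - 1), k ≫ Q.d (n - 1) n = h)

/-- `f : X ⟶ M` is a right `𝒳`-approximation of `M`. -/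
def IsRightApprox (𝒳 : Set A) {X M : A} (f : X ⟶ M) : Prop :=
  X ∈ 𝒳 ∧ ∀ X' ∈ 𝒳, ∀ g : X' ⟶ M, ∃ h : X' ⟶ X, h ≫ f = g

/-- `f : M ⟶ Y` is a left `𝒴`-approximation of `M`. -/
def IsLeftApprox (𝒴 : Set A) {M Y : A} (f : M ⟶ Y) : Prop :=
  Y ∈ 𝒴 ∧ ∀ Y' ∈ 𝒴, ∀ g : M ⟶ Y', ∃ h : Y ⟶ Y', f ≫ h = g

/-- A minimal (right minimal) right `𝒳`-approximation. -/
def IsMinimalRightApprox (𝒳 : Set A) {X M : A} (f : X ⟶ M) : Prop :=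
  IsRightApprox 𝒳 f ∧ ∀ s : X ⟶ X, s ≫ f = f → IsIso s

/-- A minimal (left minimal) left `𝒴`-approximation. -/
def IsMinimalLeftApprox (𝒴 : Set A) {M Y : A} (f : M ⟶ Y) : Prop :=
  IsLeftApprox 𝒴 f ∧ ∀ s : Y ⟶ Y, f ≫ s = f → IsIso s

/-- `(𝒳, 𝒴)` is a balanced pair: `𝒳` is contravariantly finite, `𝒴` is covariantly
finite, every object has a left `𝒴`-acyclic proper `𝒳`-resolution and a right
`𝒳`-acyclic proper `𝒴`-coresolution. -/
def IsBalancedPair (𝒳 𝒴 : Set A) : Prop :=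
  (∀ M : A, ∃ (X : A) (f : X ⟶ M), IsRightApprox 𝒳 f) ∧
  (∀ M : A, ∃ (Y : A) (f : M ⟶ Y), IsLeftApprox 𝒴 f) ∧
  (∀ M : A, ∃ (P : CochainComplex A ℤ) (ε : P.X 0 ⟶ M),
    IsProperXResolution 𝒳 M P ε ∧ AugResLeftAcyclic 𝒴 M P ε) ∧
  (∀ N : A, ∃ (Q : CochainComplex A ℤ) (η : N ⟶ Q.X 0),
    IsProperYCoresolution 𝒴 N Q η ∧ AugCoresRightAcyclic 𝒳 N Q η)

/-- Vanishing of the relative Ext group `Ext⁎ⁱ(M, N)`: the `i`-th cohomology of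
`Hom(P, N)` vanishes for every proper `𝒳`-resolution `P` of `M`. -/
def ExtStarVanish (𝒳 : Set A) (i : ℕ) (M N : A) : Prop :=
  ∀ (P : CochainComplex A ℤ) (ε : P.X 0 ⟶ M), IsProperXResolution 𝒳 M P ε →
    ∀ h : P.X (-(i : ℤ)) ⟶ N, P.d (-(i : ℤ) - 1) (-(i : ℤ)) ≫ h = 0 →
      ∃ k : P.X (-(i : ℤ) + 1) ⟶ N, P.d (-(i : ℤ)) (-(i : ℤ) + 1) ≫ k = h

/-- A cotorsion pair relative to the balanced pair `(𝒳, 𝒴)`, defined by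
orthogonality with respect to `Ext⁎¹`. -/
def IsRelCotorsionPair (𝒳 𝒞 𝒟 : Set A) : Prop :=
  (∀ C : A, C ∈ 𝒞 ↔ ∀ D ∈ 𝒟, ExtStarVanish 𝒳 1 C D) ∧
  (∀ D : A, D ∈ 𝒟 ↔ ∀ C ∈ 𝒞, ExtStarVanish 𝒳 1 C D)

/-- `𝒳` is admissible: every right `𝒳`-approximation is an epimorphism. -/
def XAdmissible (𝒳 : Set A) : Prop :=
  ∀ (X M : A) (f : X ⟶ M), IsRightApprox 𝒳 f → Epi f

/-- `𝒴` is coadmissible: every left `𝒴`-approximation is a monomorphism. -/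
def YCoadmissible (𝒴 : Set A) : Prop :=
  ∀ (M Y : A) (f : M ⟶ Y), IsLeftApprox 𝒴 f → Mono f

/-- `𝒳`-resolution dimension of `M` is at most `n`. -/
def XResdimLE (𝒳 : Set A) (n : ℕ) (M : A) : Prop :=
  ∃ (P : CochainComplex A ℤ) (ε : P.X 0 ⟶ M),
    IsProperXResolution 𝒳 M P ε ∧ ∀ i : ℤ, i < -(n : ℤ) → IsZero (P.X i)

/-- `𝒴`-coresolution dimension of `N` is at most `n`. -/
def YCoresdimLE (𝒴 : Set A) (n : ℕ) (N : A) : Prop :=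
  ∃ (Q : CochainComplex A ℤ) (η : N ⟶ Q.X 0),
    IsProperYCoresolution 𝒴 N Q η ∧ ∀ i : ℤ, (n : ℤ) < i → IsZero (Q.X i)


section stmt13

/-- right `𝒳`-quasi-isomorphisms, as a class of morphisms of the homotopy category -/
noncomputable def RightW (𝒳 : Set A) :
    MorphismProperty (HomotopyCategory A (ComplexShape.up ℤ)) := fun K L φ =>
  ∃ f : K.as ⟶ L.as, (HomotopyCategory.quotient A (ComplexShape.up ℤ)).map f = φ ∧
    RightAcyclicComplex 𝒳 (CochainComplex.mappingCone f)

/-!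
A morphism `X[0] ⟶ C[n]` in `K(𝒜)` is a degree `n` cohomology class of `Hom(X, C)`, so the
right `𝒳`-acyclic complexes are exactly the objects right orthogonal to all shifted stalk
complexes `X[n]`, `X ∈ 𝒳`. Hence they form a triangulated subcategory, whose class of morphisms
with acyclic cone is `RightW 𝒳`. A bounded above complex `X` with components in `𝒳` is left
orthogonal to this subcategory: a chain map from `X` to a right `𝒳`-acyclic complex is
null-homotopic, the homotopy being built degree by degree downwards from the top of `X`.
Morphisms out of such a left orthogonal object are unchanged by the Verdier localization.
-/

namespace CategoryTheory.ObjectProperty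

lemma rightOrthogonal_shiftClosure_iff {C : Type*} [Category C] [Preadditive C]
    {G : Type*} [AddGroup G] [HasShift C G] [∀ a : G, (shiftFunctor C a).Additive]
    (P : ObjectProperty C) (Y : C) :
    (P.shiftClosure G).rightOrthogonal Y ↔ ∀ a : G, P.rightOrthogonal (Y⟦a⟧) := by
  constructor
  · intro hY a Z f hZ
    let adj := (shiftEquiv C a).symm.toAdjunction
    have : (shiftEquiv C a).symm.functor.Additive := inferInstanceAs (shiftFunctor C (-a)).Additive
    obtain ⟨g, rfl⟩ := (adj.homEquiv Z Y).surjective f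
    rw [hY g ⟨Z, -a, Iso.refl _, hZ⟩]
    exact adj.homAddEquiv_zero Z Y
  · rintro hY S f ⟨Z, a, e, hZ⟩
    let adj := (shiftEquiv C a).toAdjunction
    have : (shiftEquiv C a).functor.Additive := inferInstanceAs (shiftFunctor C a).Additive
    obtain ⟨g, hg⟩ := (adj.homEquiv Z Y).symm.surjective (e.inv ≫ f)
    rw [hY (-a) g hZ] at hg
    rw [← cancel_epi e.inv, comp_zero]
    exact hg.symm.trans (adj.homAddEquiv_symm_zero Z Y)

end CategoryTheory.ObjectProperty

section

open HomotopyCategory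

variable {𝒳 : Set A}

open CochainComplex.HomComplex in
theorem forall_quotient_single_hom_eq_zero_iff {𝒞 : Type*} [Category 𝒞] [Preadditive 𝒞]
    [HasZeroObject 𝒞] (X : 𝒞) (C : CochainComplex 𝒞 ℤ) (n : ℤ) :
    (∀ φ : (quotient 𝒞 (.up ℤ)).obj ((CochainComplex.singleFunctor 𝒞 0).obj X) ⟶
        (quotient 𝒞 (.up ℤ)).obj (C⟦n⟧), φ = 0) ↔
      ∀ h : X ⟶ C.X n, h ≫ C.d n (n + 1) = 0 →
        ∃ k : X ⟶ C.X (n - 1), k ≫ C.d (n - 1) n = h := by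
  constructor
  · intro H h hh
    rw [← Cocycle.fromSingleMk_mem_coboundaries_iff h (zero_add n) (n + 1) rfl hh (n - 1)
      (by omega), ← CohomologyClass.toHom_mk_eq_zero_iff]
    exact H _
  · intro H φ
    obtain ⟨c, rfl⟩ := (CohomologyClass.homAddEquiv (K := (CochainComplex.singleFunctor 𝒞 0).obj X) (L := C)
      (n := n)).surjective φ
    obtain ⟨x, rfl⟩ := c.mk_surjective
    obtain ⟨h, hh, rfl⟩ := Cocycle.fromSingleMk_surjective x n (zero_add n) (n + 1) rfl
    rw [CohomologyClass.homAddEquiv_apply, CohomologyClass.toHom_mk_eq_zero_iff,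
      Cocycle.fromSingleMk_mem_coboundaries_iff h (zero_add n) (n + 1) rfl hh (n - 1)
        (by omega)]
    exact H h hh

noncomputable abbrev stalkComplexes (𝒳 : Set A) : ObjectProperty (HomotopyCategory A (.up ℤ)) :=
  ObjectProperty.ofObj fun X : 𝒳 =>
    (quotient A (.up ℤ)).obj ((CochainComplex.singleFunctor A 0).obj X.1)

theorem rightAcyclicComplex_iff_rightOrthogonal (C : CochainComplex A ℤ) :
    RightAcyclicComplex 𝒳 C ↔
      ((stalkComplexes 𝒳).shiftClosure ℤ).rightOrthogonal ((quotient A (.up ℤ)).obj C) := by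
  rw [ObjectProperty.rightOrthogonal_shiftClosure_iff]
  have hshift (n : ℤ) := (stalkComplexes 𝒳).rightOrthogonal.prop_iff_of_iso
    (((quotient A (.up ℤ)).commShiftIso n).app C)
  refine ⟨fun hC n => (hshift n).1 ?_, fun hC X hX n => ?_⟩
  · rintro _ φ ⟨⟨X, hX⟩⟩
    exact (forall_quotient_single_hom_eq_zero_iff X C n).2 (hC X hX n) φ
  · exact (forall_quotient_single_hom_eq_zero_iff X C n).1
      fun φ => (hshift n).2 (hC n) φ (.mk (⟨X, hX⟩ : 𝒳))

theorem trW_quotient_map_iff {K L : CochainComplex A ℤ} (f : K ⟶ L) :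
    ((stalkComplexes 𝒳).shiftClosure ℤ).rightOrthogonal.trW ((quotient A (.up ℤ)).map f) ↔
      RightAcyclicComplex 𝒳 (CochainComplex.mappingCone f) :=
  (ObjectProperty.trW_iff_of_distinguished _ _ (mappingCone_triangleh_distinguished f)).trans
    (rightAcyclicComplex_iff_rightOrthogonal _).symm

theorem rightW_eq_trW (𝒳 : Set A) :
    RightW 𝒳 = ((stalkComplexes 𝒳).shiftClosure ℤ).rightOrthogonal.trW := by
  ext K L φ
  constructor
  · rintro ⟨f, rfl, hf⟩
    exact (trW_quotient_map_iff f).2 hf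
  · intro hφ
    obtain ⟨f, rfl⟩ := (quotient A (.up ℤ)).map_surjective φ
    exact ⟨f, rfl, (trW_quotient_map_iff f).1 hφ⟩

theorem RightAcyclicComplex.exists_comp_d_eq {C : CochainComplex A ℤ}
    (hC : RightAcyclicComplex 𝒳 C) {X : A} (hX : X ∈ 𝒳) {i j k : ℤ} (hij : i + 1 = j)
    (hjk : j + 1 = k) (h : X ⟶ C.X j) (hh : h ≫ C.d j k = 0) :
    ∃ g : X ⟶ C.X i, g ≫ C.d i j = h := by
  obtain rfl : i = j - 1 := by omega
  subst hjk
  exact hC X hX j h hh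

variable {X E : CochainComplex A ℤ}

-- The `else 0` branch is a junk default: under the hypotheses of
-- `descendingHomotopy_comp_d` the existential always holds.
open Classical in
noncomputable def descendingHomotopy (f : X ⟶ E) (b : ℤ) (i j : ℤ) : X.X i ⟶ E.X j :=
  if b < i then 0
  else if h : ∃ g : X.X i ⟶ E.X j,
      g ≫ E.d j i = f.f i - X.d i (i + 1) ≫ descendingHomotopy f b (i + 1) i
    then h.choose else 0
termination_by (b + 1 - i).toNat
decreasing_by omega

theorem descendingHomotopy_comp_d {f : X ⟶ E} {b : ℤ} (hb : ∀ i, b < i → IsZero (X.X i))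
    (hX : ∀ i, X.X i ∈ 𝒳) (hE : RightAcyclicComplex 𝒳 E) (i j : ℤ) (hij : j + 1 = i) :
    descendingHomotopy f b i j ≫ E.d j i =
      f.f i - X.d i (i + 1) ≫ descendingHomotopy f b (i + 1) i := by
  by_cases hi : b < i
  · exact (hb i hi).eq_of_src _ _
  · have ih := descendingHomotopy_comp_d (f := f) hb hX hE (i + 1) i rfl
    have hcycle : (f.f i - X.d i (i + 1) ≫ descendingHomotopy f b (i + 1) i) ≫
        E.d i (i + 1) = 0 := by
      rw [Preadditive.sub_comp, Category.assoc, ih, f.comm]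
      simp
    have h := hE.exists_comp_d_eq (hX i) hij rfl _ hcycle
    rw [descendingHomotopy, if_neg hi, dif_pos h]
    exact h.choose_spec
termination_by (b + 1 - i).toNat
decreasing_by omega

theorem MinusComplexIn.nonempty_homotopy_zero (hX : MinusComplexIn 𝒳 X)
    (hE : RightAcyclicComplex 𝒳 E) (f : X ⟶ E) : Nonempty (Homotopy f 0) := by
  obtain ⟨⟨b, hb⟩, hX⟩ := hX
  refine ⟨{
    hom i j := if j + 1 = i then descendingHomotopy f b i j else 0
    zero i j hij := if_neg hij
    comm i := ?_ }⟩
  rw [dNext_eq _ (show (ComplexShape.up ℤ).Rel i (i + 1) from rfl),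
    prevD_eq _ (show (ComplexShape.up ℤ).Rel (i - 1) i from sub_add_cancel i 1), if_pos rfl,
    if_pos (sub_add_cancel i 1), descendingHomotopy_comp_d hb hX hE i (i - 1) (by omega)]
  simp

theorem MinusComplexIn.leftOrthogonal_quotient_obj (hX : MinusComplexIn 𝒳 X) :
    ((stalkComplexes 𝒳).shiftClosure ℤ).rightOrthogonal.leftOrthogonal
      ((quotient A (.up ℤ)).obj X) := by
  intro M g hM
  obtain ⟨g, rfl⟩ := (quotient A (.up ℤ)).map_surjective g
  exact eq_of_homotopy _ _
    (hX.nonempty_homotopy_zero ((rightAcyclicComplex_iff_rightOrthogonal M.as).2 hM) g).some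

end

theorem stmt13 (𝒳 : Set A) (X C : CochainComplex A ℤ) (hX : MinusComplexIn 𝒳 X)
    (D : Type*) [Category D] (L : HomotopyCategory A (ComplexShape.up ℤ) ⥤ D)
    [L.IsLocalization (RightW 𝒳)] :
    Function.Bijective
      (fun φ : ((HomotopyCategory.quotient A (ComplexShape.up ℤ)).obj X ⟶
          (HomotopyCategory.quotient A (ComplexShape.up ℤ)).obj C) => L.map φ) := by
  have : L.IsLocalization ((stalkComplexes 𝒳).shiftClosure ℤ).rightOrthogonal.trW :=
    rightW_eq_trW 𝒳 ▸ ‹_›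
  exact ObjectProperty.leftOrthogonal.map_bijective_of_isTriangulated
    hX.leftOrthogonal_quotient_obj L _

end stmt13
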